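/- arXiv:1704.06035 — 6 statements merged into one kernel-verified Lean document; each statement's English description precedes it below -/
import Mathlib

section
/- Let (X, μ) be a measure space and f_1,…,f_n, g_1,…,g_n : X → ℂ be measurable functions such that all products f_i·g_j are integrable. Then (1/n!) ∫_{X^n} det(f_i(x_j)) · det(g_i(x_j)) dμ^n(x) = det(∫_X f_i(x) g_j(x) dμ(x)), where both determinants inside the integral are n×n determinants indexed by 1 ≤ i, j ≤ n. -/
/-!
Expanding both determinants by the Leibniz formula turns the integrand into a signed sum of
products `∏ⱼ fσ(j)(xⱼ) gτ(j)(xⱼ)`, each of which factorizes under the product measure into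
`∏ⱼ Aσ(j)τ(j)` with `A = (∫ fᵢ gⱼ dμ)`. For fixed `σ`, the sum over `τ` is the Leibniz expansion
of `A` with rows permuted by `σ`, i.e. `sign σ · det A`; the two signs cancel, and each of the
`n!` permutations `σ` contributes `det A`.
-/

open MeasureTheory Equiv

namespace Matrix

variable {ι R : Type*} [Fintype ι] [DecidableEq ι] [CommRing R]

theorem sum_perm_sign_mul_prod_apply_perm (A : Matrix ι ι R) (σ : Perm ι) :
    ∑ τ : Perm ι, ((Perm.sign τ : ℤ) : R) * ∏ j, A (σ j) (τ j) = (Perm.sign σ : ℤ) * A.det := by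
  rw [← det_permute, ← det_transpose, det_apply']
  rfl

theorem sum_sum_perm_sign_mul_sign_mul_prod (A : Matrix ι ι R) :
    ∑ σ : Perm ι, ∑ τ : Perm ι, ((Perm.sign σ : ℤ) : R) * (Perm.sign τ : ℤ) * ∏ j, A (σ j) (τ j)
      = (Fintype.card ι).factorial * A.det := by
  have h (σ : Perm ι) :
      ∑ τ : Perm ι, ((Perm.sign σ : ℤ) : R) * (Perm.sign τ : ℤ) * ∏ j, A (σ j) (τ j) = A.det := by
    simp_rw [mul_assoc, ← Finset.mul_sum, sum_perm_sign_mul_prod_apply_perm, ← mul_assoc,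
      ← Int.cast_mul, ← Units.val_mul, Int.units_mul_self, Units.val_one, Int.cast_one, one_mul]
  simp [h, Fintype.card_perm]

theorem det_of_apply_mul_det_of_apply {α : Type*} (f g : ι → α → R) (x : ι → α) :
    (of fun i j => f i (x j)).det * (of fun i j => g i (x j)).det
      = ∑ σ : Perm ι, ∑ τ : Perm ι,
          ((Perm.sign σ : ℤ) : R) * (Perm.sign τ : ℤ) * ∏ j, f (σ j) (x j) * g (τ j) (x j) := by
  simp_rw [det_apply', of_apply, Finset.sum_mul_sum, Finset.prod_mul_distrib]
  refine Finset.sum_congr rfl fun σ _ => Finset.sum_congr rfl fun τ _ => ?_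
  ring

end Matrix

theorem integral_pi_det_mul_det {ι X 𝕜 : Type*} [Fintype ι] [DecidableEq ι] [RCLike 𝕜]
    [MeasurableSpace X] (μ : Measure X) [SigmaFinite μ] (f g : ι → X → 𝕜)
    (hint : ∀ i j, Integrable (fun x => f i x * g j x) μ) :
    ∫ x : ι → X, (Matrix.of fun i j => f i (x j)).det * (Matrix.of fun i j => g i (x j)).det
        ∂(Measure.pi fun _ => μ)
      = (Fintype.card ι).factorial * (Matrix.of fun i j => ∫ x, f i x * g j x ∂μ).det := by
  have hprod (σ τ : Perm ι) : Integrable (fun x : ι → X => ∏ j, f (σ j) (x j) * g (τ j) (x j))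
      (Measure.pi fun _ => μ) :=
    Integrable.fintype_prod fun j => hint (σ j) (τ j)
  have hfactor (σ τ : Perm ι) :
      ∫ x : ι → X, ∏ j, f (σ j) (x j) * g (τ j) (x j) ∂(Measure.pi fun _ => μ)
        = ∏ j, ∫ x, f (σ j) x * g (τ j) x ∂μ :=
    integral_fintype_prod_eq_prod fun j y => f (σ j) y * g (τ j) y
  simp_rw [Matrix.det_of_apply_mul_det_of_apply]
  rw [integral_finsetSum _ fun σ _ => integrable_finsetSum _ fun τ _ => (hprod σ τ).const_mul _]
  simp_rw [integral_finsetSum _ fun τ _ => (hprod _ τ).const_mul _, integral_const_mul, hfactor]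
  rw [← Matrix.sum_sum_perm_sign_mul_sign_mul_prod]
  simp only [Matrix.of_apply]

theorem andreief_identity_general {X : Type*} [MeasurableSpace X] (μ : Measure X) [SigmaFinite μ]
    (n : ℕ) (f g : Fin n → X → ℂ)
    (hint : ∀ i j, Integrable (fun x => f i x * g j x) μ) :
    (n.factorial : ℂ)⁻¹ *
        ∫ x : Fin n → X,
          (Matrix.det (Matrix.of fun i j : Fin n => f i (x j))) *
            (Matrix.det (Matrix.of fun i j : Fin n => g i (x j)))
          ∂(Measure.pi fun _ : Fin n => μ)
      = Matrix.det (Matrix.of fun i j : Fin n => ∫ x, f i x * g j x ∂μ) := by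
  rw [integral_pi_det_mul_det μ f g hint, Fintype.card_fin,
    inv_mul_cancel_left₀ (Nat.cast_ne_zero.mpr n.factorial_ne_zero)]

/-- The Cauchy–Binet / Andréief identity:
`(1/n!) ∫_{Xⁿ} det(fᵢ(xⱼ)) det(gᵢ(xⱼ)) dμⁿ(x) = det(∫_X fᵢ g_j dμ)`. -/
theorem andreief_identity {X : Type*} [MeasurableSpace X] (μ : Measure X) [SigmaFinite μ]
    (n : ℕ) (f g : Fin n → X → ℂ)
    (hf : ∀ i, Measurable (f i)) (hg : ∀ i, Measurable (g i))
    (hint : ∀ i j, Integrable (fun x => f i x * g j x) μ) :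
    (n.factorial : ℂ)⁻¹ *
        ∫ x : Fin n → X,
          (Matrix.det (Matrix.of fun i j : Fin n => f i (x j))) *
            (Matrix.det (Matrix.of fun i j : Fin n => g i (x j)))
          ∂(Measure.pi fun _ : Fin n => μ)
      = Matrix.det (Matrix.of fun i j : Fin n => ∫ x, f i x * g j x ∂μ) :=
  andreief_identity_general μ n f g hint
end

section
/- Let a, b ∈ ℂ with |a| < 1 and |b| < 1, and let φ^+(ζ) and φ^−(ζ) be functions on an annulus with φ^+ analytic and nonzero in |ζ| < 1+ε with φ^+(0) = 1, and φ^− analytic and nonzero in |ζ| > 1−ε (including ∞) with φ^−(∞) = 1. Writing c_j^+ for the j-th Fourier coefficient of 1/φ^+ (which vanishes for j < 0) and c_j^− for the j-th Fourier coefficient of 1/φ^− (which vanishes for j > 0), the double series ∑_{i,j=1}^∞ z^j (∑_{k=1}^∞ c^+_{j−k} c^−_{k−i}) w^{−i} converges to (z/(w−z)) · 1/(φ^+(z) φ^−(w)) whenever |z| < |w|, z in the domain of analyticity of φ^+ and w in that of φ^−. -/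
/-!
With `j = m + k` and `i = n + k`, the `k`-th term of `z^j T(φ)⁻¹_{ji} w^{-i}`, where
`T(φ)⁻¹ = T(1/φ⁺) T(1/φ⁻)`, becomes `(z/w)^k · c⁺_m z^m · c⁻_{-n} w^{-n}`. The triple series is
thus the product of a geometric series in `z/w` and the expansions of `1/φ⁺(z)` and `1/φ⁻(w)`;
these converge absolutely, so the triple sum may be regrouped along the fibres over `(j, i)`,
which are finite because `c⁻` vanishes at positive indices.
-/

theorem HasSum.mul_of_finiteDimensional {ι κ R : Type*} [NormedRing R] [NormedAlgebra ℝ R]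
    [FiniteDimensional ℝ R] {f : ι → R} {g : κ → R} {s t : R}
    (hf : HasSum f s) (hg : HasSum g t) :
    HasSum (fun x : ι × κ => f x.1 * g x.2) (s * t) :=
  haveI := FiniteDimensional.complete ℝ R
  hf.mul hg (summable_mul_of_summable_norm (summable_norm_iff.2 hf.summable)
    (summable_norm_iff.2 hg.summable))

theorem hasSum_div_pow_succ_of_norm_lt {K : Type*} [NormedField K] {z w : K} (h : ‖z‖ < ‖w‖) :
    HasSum (fun k : ℕ => (z / w) ^ (k + 1)) (z / (w - z)) := by
  have hw : w ≠ 0 := norm_pos_iff.1 ((norm_nonneg z).trans_lt h)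
  have hzw : w - z ≠ 0 := sub_ne_zero.2 fun hwz => h.ne (by rw [hwz])
  have hq : ‖z / w‖ < 1 := by rwa [norm_div, div_lt_one (norm_pos_iff.2 hw)]
  have hsum : z / w * (1 - z / w)⁻¹ = z / (w - z) := by field_simp
  simpa only [pow_succ', hsum] using (hasSum_geometric_of_norm_lt_one hq).mul_left (z / w)

theorem hasSum_comp_addDiag_iff {M : Type*} [AddCommMonoid M] [TopologicalSpace M]
    {F : (ℕ × ℕ) × ℕ → M} {s : M} (hF : ∀ p k, p.1 < k ∨ p.2 < k → F (p, k) = 0) :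
    HasSum (fun x : ℕ × ℕ × ℕ => F ((x.2.1 + x.1, x.2.2 + x.1), x.1)) s ↔ HasSum F s := by
  let e : ℕ × ℕ × ℕ → (ℕ × ℕ) × ℕ := fun x => ((x.2.1 + x.1, x.2.2 + x.1), x.1)
  have he : Function.Injective e := by
    rintro ⟨k, m, n⟩ ⟨k', m', n'⟩ h
    simp only [e, Prod.mk.injEq] at h ⊢
    omega
  refine he.hasSum_iff fun ⟨⟨j, i⟩, k⟩ hx => hF _ _ ?_
  by_contra! hle
  exact hx ⟨(k, j - k, i - k), by simp only [e]; congr <;> omega⟩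

/-- The `(j, i)` entry of the Toeplitz product `T(a) T(b)`; for `a = c⁺`, `b = c⁻` this is
`T(φ)⁻¹_{ji}`. -/
noncomputable def toeplitzProductEntry {R : Type*} [NonUnitalNonAssocSemiring R]
    [TopologicalSpace R] (a b : ℤ → R) (j i : ℤ) : R :=
  ∑' k : ℕ, a (j - ((k : ℤ) + 1)) * b (((k : ℤ) + 1) - i)

theorem hasSum_toeplitzProductEntry {R : Type*} [NonUnitalNonAssocSemiring R]
    [TopologicalSpace R] (a : ℤ → R) {b : ℤ → R} (hb : ∀ n, 0 < n → b n = 0) (j i : ℤ) :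
    HasSum (fun k : ℕ => a (j - ((k : ℤ) + 1)) * b (((k : ℤ) + 1) - i))
      (toeplitzProductEntry a b j i) :=
  (summable_of_ne_finset_zero (s := Finset.range i.toNat) fun k hk => by
    rw [Finset.mem_range, not_lt] at hk
    rw [hb _ (by omega), mul_zero]).hasSum

theorem toeplitzProduct_term_eq_zero {R : Type*} [MulZeroClass R] {a b : ℤ → R}
    (ha : ∀ n < 0, a n = 0) (hb : ∀ n, 0 < n → b n = 0) {j i k : ℕ} (h : j < k ∨ i < k) :
    a ((j : ℤ) + 1 - ((k : ℤ) + 1)) * b (((k : ℤ) + 1) - ((i : ℤ) + 1)) = 0 := by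
  rcases h with hj | hi
  · rw [ha _ (by omega), zero_mul]
  · rw [hb _ (by omega), mul_zero]

theorem toeplitzProduct_term_shift_eq {K : Type*} [Field K] (a b : ℤ → K) {z w : K} (hw : w ≠ 0)
    (k m n : ℕ) :
    a (((m + k : ℕ) : ℤ) + 1 - ((k : ℤ) + 1)) * b (((k : ℤ) + 1) - (((n + k : ℕ) : ℤ) + 1))
      * z ^ (m + k + 1) * w ^ (-(((n + k : ℕ) : ℤ) + 1))
      = (z / w) ^ (k + 1) * (a m * z ^ m * (b (-(n : ℤ)) * w ^ (-(n : ℤ)))) := by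
  have hm : ((m + k : ℕ) : ℤ) + 1 - ((k : ℤ) + 1) = m := by push_cast; ring
  have hn : ((k : ℤ) + 1) - (((n + k : ℕ) : ℤ) + 1) = -(n : ℤ) := by push_cast; ring
  have hexp : -(((n + k : ℕ) : ℤ) + 1) = -((n + k + 1 : ℕ) : ℤ) := by push_cast; ring
  rw [hm, hn, hexp, zpow_neg, zpow_natCast, zpow_neg, zpow_natCast, div_pow]
  field_simp
  ring

theorem toeplitz_inverse_summation_general
    (ε : ℝ) (φp φm : ℂ → ℂ) (cp cm : ℤ → ℂ)
    (hcp0 : ∀ j : ℤ, j < 0 → cp j = 0)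
    (hcm0 : ∀ j : ℤ, 0 < j → cm j = 0)
    (hcp : ∀ z ∈ Metric.ball (0 : ℂ) (1 + ε),
      HasSum (fun k : ℕ => cp k * z ^ k) (1 / φp z))
    (hcm : ∀ w : ℂ, 1 - ε < ‖w‖ →
      HasSum (fun k : ℕ => cm (-(k : ℤ)) * w ^ (-(k : ℤ))) (1 / φm w))
    (z w : ℂ) (hz : ‖z‖ < 1 + ε) (hw : 1 - ε < ‖w‖)
    (hzw : ‖z‖ < ‖w‖) :
    HasSum
      (fun p : ℕ × ℕ =>
        (∑' k : ℕ, cp ((p.1 : ℤ) + 1 - ((k : ℤ) + 1)) * cm (((k : ℤ) + 1) - ((p.2 : ℤ) + 1)))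
          * z ^ (p.1 + 1) * w ^ (-((p.2 : ℤ) + 1)))
      (z / (w - z) * (1 / (φp z * φm w))) := by
  have hw0 : w ≠ 0 := norm_pos_iff.1 ((norm_nonneg z).trans_lt hzw)
  have htriple := (hasSum_div_pow_succ_of_norm_lt hzw).mul_of_finiteDimensional
    ((hcp z (mem_ball_zero_iff.2 hz)).mul_of_finiteDimensional (hcm w hw))
  rw [one_div_mul_one_div] at htriple
  have hterms : HasSum (fun x : (ℕ × ℕ) × ℕ =>
      cp ((x.1.1 : ℤ) + 1 - ((x.2 : ℤ) + 1)) * cm (((x.2 : ℤ) + 1) - ((x.1.2 : ℤ) + 1))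
        * z ^ (x.1.1 + 1) * w ^ (-((x.1.2 : ℤ) + 1)))
      (z / (w - z) * (1 / (φp z * φm w))) := by
    refine (hasSum_comp_addDiag_iff fun p k hk => ?_).1 ?_
    · simp only [toeplitzProduct_term_eq_zero hcp0 hcm0 hk, zero_mul]
    · simpa only [toeplitzProduct_term_shift_eq cp cm hw0] using htriple
  exact hterms.prod_fiberwise fun p =>
    ((hasSum_toeplitzProductEntry cp hcm0 (p.1 + 1) (p.2 + 1)).mul_right (z ^ (p.1 + 1))).mul_right
      (w ^ (-((p.2 : ℤ) + 1)))

/-- The key summation identity for the inverse of an infinite Toeplitz operator with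
Wiener–Hopf factorized symbol `φ = φ⁺ φ⁻`:  writing `c⁺` (resp. `c⁻`) for the Fourier
coefficients of `1/φ⁺` (vanishing for negative index) resp. of `1/φ⁻` (vanishing for
positive index), one has, for `|z| < |w|` in the respective domains of analyticity,
`∑_{i,j ≥ 1} z^j (∑_{k ≥ 1} c⁺_{j-k} c⁻_{k-i}) w^{-i} = (z/(w-z)) · 1/(φ⁺(z) φ⁻(w))`. -/
theorem toeplitz_inverse_summation
    (ε : ℝ) (hε : 0 < ε) (φp φm : ℂ → ℂ) (cp cm : ℤ → ℂ)
    (hφp : DifferentiableOn ℂ φp (Metric.ball 0 (1 + ε)))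
    (hφpne : ∀ z ∈ Metric.ball (0 : ℂ) (1 + ε), φp z ≠ 0)
    (hφp0 : φp 0 = 1)
    (hφm : DifferentiableOn ℂ φm {w : ℂ | 1 - ε < ‖w‖})
    (hφmne : ∀ w : ℂ, 1 - ε < ‖w‖ → φm w ≠ 0)
    (hφminf : Filter.Tendsto φm (Bornology.cobounded ℂ) (nhds 1))
    (hcp0 : ∀ j : ℤ, j < 0 → cp j = 0)
    (hcm0 : ∀ j : ℤ, 0 < j → cm j = 0)
    (hcp : ∀ z ∈ Metric.ball (0 : ℂ) (1 + ε),
      HasSum (fun k : ℕ => cp k * z ^ k) (1 / φp z))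
    (hcm : ∀ w : ℂ, 1 - ε < ‖w‖ →
      HasSum (fun k : ℕ => cm (-(k : ℤ)) * w ^ (-(k : ℤ))) (1 / φm w))
    (z w : ℂ) (hz : ‖z‖ < 1 + ε) (hw : 1 - ε < ‖w‖)
    (hzw : ‖z‖ < ‖w‖) :
    HasSum
      (fun p : ℕ × ℕ =>
        (∑' k : ℕ, cp ((p.1 : ℤ) + 1 - ((k : ℤ) + 1)) * cm (((k : ℤ) + 1) - ((p.2 : ℤ) + 1)))
          * z ^ (p.1 + 1) * w ^ (-((p.2 : ℤ) + 1)))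
      (z / (w - z) * (1 / (φp z * φm w))) :=
  toeplitz_inverse_summation_general ε φp φm cp cm hcp0 hcm0 hcp hcm z w hz hw hzw
end

section
/- Let f ∈ L^1 of the unit circle, n ≥ 1, and z, w ∈ ℂ with w ≠ 0. Assume the n×n Toeplitz matrix T_n(f) = (f̂(j−k))_{1≤j,k≤n} is invertible, where f̂(m) denotes the m-th Fourier coefficient of f. Then ∑_{i,j=1}^n z^j (T_n(f)^{−1})_{ji} w^{−i} = (z/w) · D_{n−1}[(1−ζ/w)(1−z/ζ) f(ζ)] / D_n[f(ζ)], where D_m[g(ζ)] denotes the m×m Toeplitz determinant det(ĝ(j−k))_{1≤j,k≤m} with symbol g. -/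
open Complex intervalIntegral

/-- The `m`-th Fourier coefficient of a symbol `f` on the unit circle,
`f̂(m) = (1/2π) ∫₀^{2π} f(e^{iθ}) e^{-imθ} dθ = (1/2πi) ∮_{|ζ|=1} ζ^{-m} f(ζ) dζ/ζ`. -/
noncomputable def symbolFourierCoeff (f : ℂ → ℂ) (m : ℤ) : ℂ :=
  (1 / (2 * Real.pi)) *
    ∫ θ in (0 : ℝ)..(2 * Real.pi),
      f (Complex.exp (θ * Complex.I)) * Complex.exp (-(m : ℂ) * θ * Complex.I)

/-!
Write `L a = 1 - a S` with `S` the lower shift matrix. The first column of `(L a)⁻¹` is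
`(a ^ i)ᵢ`, so the double sum is the `(0, 0)` entry of `M⁻¹` for `M = L (w⁻¹) T (L z)ᵀ`.
Both factors are unitriangular, so `det M = det T`, and deleting the first row and column of `M`
leaves the Toeplitz matrix of the symbol `(1 - ζ / w) (1 - z / ζ) f`, whose Fourier coefficients
are `(1 + z / w) f̂(k) - w⁻¹ f̂(k - 1) - z f̂(k + 1)`. Cramer's rule for the `(0, 0)` entry of
`M⁻¹` finishes the proof.
-/

namespace Matrix

section CommRing

variable {R : Type*} [CommRing R] {m : ℕ}

def toeplitz (n : ℕ) (c : ℤ → R) : Matrix (Fin n) (Fin n) R :=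
  of fun j k => c ((j : ℤ) - (k : ℤ))

def unitLowerBidiagonal (n : ℕ) (a : R) : Matrix (Fin n) (Fin n) R :=
  of fun j k => if j = k then 1 else if (j : ℕ) = k + 1 then -a else 0

lemma det_unitLowerBidiagonal (n : ℕ) (a : R) : det (unitLowerBidiagonal n a) = 1 := by
  have hlower : (unitLowerBidiagonal n a).BlockTriangular OrderDual.toDual := by
    intro i j hij
    have : (i : ℕ) < j := hij
    simp only [unitLowerBidiagonal, of_apply]
    rw [if_neg (by omega), if_neg (by omega)]
  rw [det_of_isLowerTriangular _ hlower]
  simp [unitLowerBidiagonal]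

lemma unitLowerBidiagonal_mulVec_zero (a : R) (v : Fin (m + 1) → R) :
    (unitLowerBidiagonal (m + 1) a *ᵥ v) 0 = v 0 := by
  rw [mulVec, dotProduct, Fintype.sum_eq_single 0]
  · simp [unitLowerBidiagonal]
  · intro k hk
    simp [unitLowerBidiagonal, Ne.symm hk]

lemma unitLowerBidiagonal_mulVec_succ (a : R) (v : Fin (m + 1) → R) (i : Fin m) :
    (unitLowerBidiagonal (m + 1) a *ᵥ v) i.succ = v i.succ - a * v i.castSucc := by
  rw [mulVec, dotProduct, Fintype.sum_eq_add i.succ i.castSucc Fin.castSucc_lt_succ.ne']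
  · simp [unitLowerBidiagonal, Fin.ext_iff, sub_eq_add_neg]
  · rintro k ⟨hk₁, hk₂⟩
    rw [Ne, Fin.ext_iff] at hk₁ hk₂
    simp only [unitLowerBidiagonal, of_apply, Fin.ext_iff, Fin.val_succ,
      Fin.val_castSucc] at hk₁ hk₂ ⊢
    rw [if_neg (by omega), if_neg (by omega), zero_mul]

lemma unitLowerBidiagonal_mulVec_pow (a : R) :
    unitLowerBidiagonal (m + 1) a *ᵥ (fun i => a ^ (i : ℕ)) = Pi.single 0 1 := by
  ext i
  cases i using Fin.cases with
  | zero => simp [unitLowerBidiagonal_mulVec_zero]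
  | succ i => simp [unitLowerBidiagonal_mulVec_succ, pow_succ']

lemma unitLowerBidiagonal_mul_apply_succ {n : Type*} [Fintype n] (a : R)
    (A : Matrix (Fin (m + 1)) n R) (i : Fin m) (k : n) :
    (unitLowerBidiagonal (m + 1) a * A) i.succ k = A i.succ k - a * A i.castSucc k :=
  unitLowerBidiagonal_mulVec_succ a (fun l => A l k) i

lemma mul_transpose_unitLowerBidiagonal_apply_succ {n : Type*} [Fintype n] (b : R)
    (A : Matrix n (Fin (m + 1)) R) (k : n) (j : Fin m) :
    (A * (unitLowerBidiagonal (m + 1) b)ᵀ) k j.succ = A k j.succ - b * A k j.castSucc := by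
  rw [mul_apply]
  simp only [transpose_apply, mul_comm (A k _)]
  exact unitLowerBidiagonal_mulVec_succ b (A k) j

lemma submatrix_succ_unitLowerBidiagonal_mul_toeplitz_mul_transpose (a b : R) (c : ℤ → R) :
    (unitLowerBidiagonal (m + 1) a * toeplitz (m + 1) c *
        (unitLowerBidiagonal (m + 1) b)ᵀ).submatrix Fin.succ Fin.succ
      = toeplitz m fun k => (1 + a * b) * c k - a * c (k - 1) - b * c (k + 1) := by
  ext i j
  rw [submatrix_apply, mul_transpose_unitLowerBidiagonal_apply_succ,
    unitLowerBidiagonal_mul_apply_succ, unitLowerBidiagonal_mul_apply_succ]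
  simp only [toeplitz, of_apply, Fin.val_succ, Fin.val_castSucc]
  push_cast
  ring_nf

end CommRing

section Field

variable {K : Type*} [Field K] {m : ℕ}

lemma inv_apply_zero_zero (A : Matrix (Fin (m + 1)) (Fin (m + 1)) K) :
    A⁻¹ 0 0 = det (A.submatrix Fin.succ Fin.succ) / det A := by
  rw [inv_def, smul_apply, adjugate_fin_succ_eq_det_submatrix]
  simp [Ring.inverse_eq_inv, div_eq_inv_mul]

lemma inv_unitLowerBidiagonal_mulVec_single_zero (a : K) :
    (unitLowerBidiagonal (m + 1) a)⁻¹ *ᵥ Pi.single 0 1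
      = fun i : Fin (m + 1) => a ^ (i : ℕ) := by
  rw [← unitLowerBidiagonal_mulVec_pow, mulVec_mulVec,
    nonsing_inv_mul _ (by simp [det_unitLowerBidiagonal]), one_mulVec]

lemma sum_pow_mul_inv_mul_pow (A : Matrix (Fin (m + 1)) (Fin (m + 1)) K) (a b : K) :
    ∑ j : Fin (m + 1), ∑ i, b ^ (j : ℕ) * A⁻¹ j i * a ^ (i : ℕ)
      = (unitLowerBidiagonal (m + 1) a * A * (unitLowerBidiagonal (m + 1) b)ᵀ)⁻¹ 0 0 := by
  set e : Fin (m + 1) → K := Pi.single 0 1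
  calc ∑ j : Fin (m + 1), ∑ i, b ^ (j : ℕ) * A⁻¹ j i * a ^ (i : ℕ)
      = ((unitLowerBidiagonal (m + 1) b)⁻¹ *ᵥ e) ⬝ᵥ
          A⁻¹ *ᵥ ((unitLowerBidiagonal (m + 1) a)⁻¹ *ᵥ e) := by
        rw [inv_unitLowerBidiagonal_mulVec_single_zero, inv_unitLowerBidiagonal_mulVec_single_zero,
          dot_mulVec_eq_sum_sum, Finset.sum_comm]
    _ = e ⬝ᵥ ((unitLowerBidiagonal (m + 1) b)⁻¹ᵀ * A⁻¹ *
          (unitLowerBidiagonal (m + 1) a)⁻¹) *ᵥ e := by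
        rw [← mulVec_mulVec, ← mulVec_mulVec, dotProduct_mulVec e, vecMul_transpose]
    _ = _ := by
        rw [mul_inv_rev, mul_inv_rev, transpose_nonsing_inv, ← mul_assoc]
        simp [e]

theorem sum_pow_mul_toeplitz_inv_mul_pow (c : ℤ → K) (a b : K) :
    ∑ j : Fin (m + 1), ∑ i, b ^ (j : ℕ) * (toeplitz (m + 1) c)⁻¹ j i * a ^ (i : ℕ)
      = det (toeplitz m fun k => (1 + a * b) * c k - a * c (k - 1) - b * c (k + 1)) /
          det (toeplitz (m + 1) c) := by
  rw [sum_pow_mul_inv_mul_pow, inv_apply_zero_zero,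
    submatrix_succ_unitLowerBidiagonal_mul_toeplitz_mul_transpose, det_mul, det_mul,
    det_transpose, det_unitLowerBidiagonal, det_unitLowerBidiagonal, one_mul, mul_one]

end Field

end Matrix

section symbolFourierCoeff

open MeasureTheory

variable {f g : ℂ → ℂ}

lemma symbolFourierCoeff_congr (h : ∀ θ : ℝ, f (exp (θ * I)) = g (exp (θ * I))) :
    symbolFourierCoeff f = symbolFourierCoeff g := by
  ext k
  simp only [symbolFourierCoeff, h]

lemma symbolFourierCoeff_const_mul (c : ℂ) (k : ℤ) :
    symbolFourierCoeff (fun ζ => c * f ζ) k = c * symbolFourierCoeff f k := by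
  simp only [symbolFourierCoeff, mul_assoc, intervalIntegral.integral_const_mul]
  ring

lemma symbolFourierCoeff_sub
    (hf : IntervalIntegrable (fun θ : ℝ => f (exp (θ * I))) volume 0 (2 * Real.pi))
    (hg : IntervalIntegrable (fun θ : ℝ => g (exp (θ * I))) volume 0 (2 * Real.pi)) (k : ℤ) :
    symbolFourierCoeff (fun ζ => f ζ - g ζ) k
      = symbolFourierCoeff f k - symbolFourierCoeff g k := by
  have hcont : ContinuousOn (fun θ : ℝ => exp (-(k : ℂ) * θ * I)) (Set.uIcc 0 (2 * Real.pi)) :=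
    (by fun_prop : Continuous _).continuousOn
  simp only [symbolFourierCoeff, sub_mul]
  rw [integral_sub (hf.mul_continuousOn hcont) (hg.mul_continuousOn hcont), mul_sub]

lemma symbolFourierCoeff_zpow_mul (f : ℂ → ℂ) (p k : ℤ) :
    symbolFourierCoeff (fun ζ => ζ ^ p * f ζ) k = symbolFourierCoeff f (k - p) := by
  simp only [symbolFourierCoeff]
  congr 1
  refine integral_congr fun θ _ => ?_
  have hshift :
      exp (p * (θ * I)) * exp (-(k : ℂ) * θ * I) = exp (-((k - p : ℤ) : ℂ) * θ * I) := by
    rw [← exp_add]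
    push_cast
    ring_nf
  rw [← exp_int_mul, mul_right_comm, hshift, mul_comm]

lemma intervalIntegrable_exp_zpow_mul
    (hf : IntervalIntegrable (fun θ : ℝ => f (exp (θ * I))) volume 0 (2 * Real.pi)) (p : ℤ) :
    IntervalIntegrable (fun θ : ℝ => exp (θ * I) ^ p * f (exp (θ * I))) volume 0 (2 * Real.pi) :=
  hf.continuousOn_mul <| Continuous.continuousOn <|
    (by fun_prop : Continuous fun θ : ℝ => exp (θ * I)).zpow₀ p fun _ => .inl (exp_ne_zero _)

lemma symbolFourierCoeff_one_sub_div_mul_one_sub_div_mul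
    (hf : IntervalIntegrable (fun θ : ℝ => f (exp (θ * I))) volume 0 (2 * Real.pi))
    (z w : ℂ) (k : ℤ) :
    symbolFourierCoeff (fun ζ => (1 - ζ / w) * (1 - z / ζ) * f ζ) k
      = (1 + w⁻¹ * z) * symbolFourierCoeff f k - w⁻¹ * symbolFourierCoeff f (k - 1)
          - z * symbolFourierCoeff f (k + 1) := by
  set g : ℂ → ℂ := fun ζ =>
    (1 + w⁻¹ * z) * f ζ - w⁻¹ * (ζ ^ (1 : ℤ) * f ζ) - z * (ζ ^ (-1 : ℤ) * f ζ)
  have hcircle : ∀ θ : ℝ, (1 - exp (θ * I) / w) * (1 - z / exp (θ * I)) * f (exp (θ * I))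
      = g (exp (θ * I)) := by
    intro θ
    have := exp_ne_zero (θ * I)
    simp only [g, zpow_one, zpow_neg_one]
    field_simp
    ring
  have h₀ := hf.const_mul (1 + w⁻¹ * z)
  have h₁ := (intervalIntegrable_exp_zpow_mul hf 1).const_mul w⁻¹
  have hinv := (intervalIntegrable_exp_zpow_mul hf (-1)).const_mul z
  rw [symbolFourierCoeff_congr hcircle, symbolFourierCoeff_sub (h₀.sub h₁) hinv,
    symbolFourierCoeff_sub h₀ h₁,
    symbolFourierCoeff_const_mul, symbolFourierCoeff_const_mul, symbolFourierCoeff_const_mul,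
    symbolFourierCoeff_zpow_mul, symbolFourierCoeff_zpow_mul, sub_neg_eq_add]

end symbolFourierCoeff

theorem finite_toeplitz_inverse_general (f : ℂ → ℂ)
    (hf : IntervalIntegrable (fun θ : ℝ => f (Complex.exp (θ * Complex.I)))
      MeasureTheory.volume 0 (2 * Real.pi))
    (n : ℕ) (hn : 1 ≤ n) (z w : ℂ) :
    ∑ j : Fin n, ∑ i : Fin n,
        z ^ ((j : ℕ) + 1) *
          (Matrix.of fun j' k' : Fin n => symbolFourierCoeff f ((j' : ℤ) - (k' : ℤ)))⁻¹ j i *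
          w ^ (-(((i : ℕ) : ℤ) + 1))
      = z / w *
          Matrix.det (Matrix.of fun j' k' : Fin (n - 1) =>
            symbolFourierCoeff (fun ζ => (1 - ζ / w) * (1 - z / ζ) * f ζ)
              ((j' : ℤ) - (k' : ℤ))) /
          Matrix.det (Matrix.of fun j' k' : Fin n =>
            symbolFourierCoeff f ((j' : ℤ) - (k' : ℤ))) := by
  obtain ⟨m, rfl⟩ : ∃ m, n = m + 1 := ⟨n - 1, by omega⟩
  have hcoeff := funext (symbolFourierCoeff_one_sub_div_mul_one_sub_div_mul hf z w)
  have hterm : ∀ (j i : ℕ) (x : ℂ),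
      z ^ (j + 1) * x * w ^ (-((i : ℤ) + 1)) = z / w * (z ^ j * x * w⁻¹ ^ i) := by
    intro j i x
    rw [← Nat.cast_succ, zpow_neg, zpow_natCast, ← inv_pow, pow_succ, pow_succ]
    ring
  simp_rw [hterm, ← Finset.mul_sum, mul_div_assoc]
  exact congrArg (z / w * ·)
    (hcoeff ▸ Matrix.sum_pow_mul_toeplitz_inv_mul_pow (symbolFourierCoeff f) w⁻¹ z)

/-- The finite Toeplitz inversion identity: for `f ∈ L¹(𝕋)`, `n ≥ 1`, `z, w ∈ ℂ`
with `w ≠ 0`, and `T_n(f) = (f̂(j-k))_{1≤j,k≤n}` invertible,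
`∑_{i,j=1}^n z^j (T_n(f)^{-1})_{ji} w^{-i}
  = (z/w) · D_{n-1}[(1-ζ/w)(1-z/ζ) f(ζ)] / D_n[f(ζ)]`,
where `D_m[g] = det(ĝ(j-k))_{1≤j,k≤m}` is the Toeplitz determinant with symbol `g`. -/
theorem finite_toeplitz_inverse (f : ℂ → ℂ)
    (hf : IntervalIntegrable (fun θ : ℝ => f (Complex.exp (θ * Complex.I)))
      MeasureTheory.volume 0 (2 * Real.pi))
    (n : ℕ) (hn : 1 ≤ n) (z w : ℂ) (hw : w ≠ 0)
    (hT : IsUnit (Matrix.det (Matrix.of fun j k : Fin n =>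
      symbolFourierCoeff f ((j : ℤ) - (k : ℤ))))) :
    ∑ j : Fin n, ∑ i : Fin n,
        z ^ ((j : ℕ) + 1) *
          (Matrix.of fun j' k' : Fin n => symbolFourierCoeff f ((j' : ℤ) - (k' : ℤ)))⁻¹ j i *
          w ^ (-(((i : ℕ) : ℤ) + 1))
      = z / w *
          Matrix.det (Matrix.of fun j' k' : Fin (n - 1) =>
            symbolFourierCoeff (fun ζ => (1 - ζ / w) * (1 - z / ζ) * f ζ)
              ((j' : ℤ) - (k' : ℤ))) /
          Matrix.det (Matrix.of fun j' k' : Fin n =>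
            symbolFourierCoeff f ((j' : ℤ) - (k' : ℤ))) :=
  finite_toeplitz_inverse_general f hf n hn z w
end

section
/- Let G be a finite graph with n black and n white vertices carrying a Kasteleyn matrix K (an n×n invertible matrix over ℂ indexed by black rows and white columns), and consider the dimer probability measure P[C] = ν(C)/Z on perfect matchings, where det K = S·Z with |S| = 1 independent of the weights. Then for distinct edges e_1 = b_1 w_1, …, e_r = b_r w_r, the probability that all of e_1,…,e_r belong to a random perfect matching equals ∏_{i=1}^r K(b_i, w_i) · det(K^{−1}(w_i, b_j))_{1≤i,j≤r}. -/
open Finset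

/-!
Give weight `0` to every edge at a vertex `b t` other than `b t w t`. The partition function of
these weights is the weight `N` of the matchings containing all the edges `b t w t`, so the
hypothesis on determinants says that the resulting matrix `K'` has `det K' = S * N`. On the other
hand `K' * K⁻¹` agrees with the identity outside the rows `b t`, and its row `b t` is
`K (b t) (w t)` times the row `w t` of `K⁻¹`; hence
`det (K' * K⁻¹) = ∏ t, K (b t) (w t) * det (K⁻¹ (w t) (b u))`. Dividing
`S * N = det (K' * K⁻¹) * det K` by `det K = S * Z` gives the formula. If two of the `b t`
coincide, both sides vanish.
-/

open Function Matrix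

theorem Matrix.det_eq_det_submatrix_of_row_eq_one {m ι R : Type*} [Fintype m] [DecidableEq m]
    [Fintype ι] [DecidableEq ι] [CommRing R] (M : Matrix m m R) {b : ι → m} (hb : Injective b)
    (h : ∀ i ∉ Set.range b, M i = (1 : Matrix m m R) i) :
    M.det = (M.submatrix b b).det := by
  classical
  rw [M.twoBlockTriangular_det (· ∈ Set.range b) fun i hi j hj => by
    rw [h i hi, one_apply_ne (by rintro rfl; exact hi hj)]]
  have hcompl : toSquareBlockProp M (· ∉ Set.range b) = 1 := by
    ext i j
    simp [toSquareBlockProp_def, h i i.2, one_apply, Subtype.ext_iff]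
  rw [hcompl, det_one, mul_one]
  convert (det_submatrix_equiv_self (Equiv.ofInjective b hb) _).symm using 2
  rfl

namespace Dimer

variable {m ι R : Type*}

open Classical in
noncomputable def forceEdges [Zero R] (ν : Matrix m m R) (b w : ι → m) : Matrix m m R :=
  of fun i j => if ∃ t, b t = i ∧ w t ≠ j then 0 else ν i j

section Zero

variable [Zero R] {ν : Matrix m m R} {b w : ι → m}

open Classical in
theorem forceEdges_apply (i j : m) :
    forceEdges ν b w i j = if ∃ t, b t = i ∧ w t ≠ j then 0 else ν i j :=
  rfl

theorem forceEdges_of_notMem_range {i : m} (hi : i ∉ Set.range b) :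
    forceEdges ν b w i = ν i := by
  ext j
  rw [forceEdges_apply, if_neg]
  rintro ⟨t, rfl, -⟩
  exact hi ⟨t, rfl⟩

theorem forceEdges_apply_self [DecidableEq m] (hb : Injective b) (t : ι) :
    forceEdges ν b w (b t) = Pi.single (w t) (ν (b t) (w t)) := by
  ext j
  by_cases hj : j = w t
  · subst hj
    rw [Pi.single_eq_same, forceEdges_apply, if_neg]
    rintro ⟨u, hu, hne⟩
    exact hne (by rw [hb hu])
  · rw [Pi.single_eq_of_ne hj, forceEdges_apply, if_pos ⟨t, rfl, Ne.symm hj⟩]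

theorem forceEdges_eq_zero {i j : m} (h : ν i j = 0) : forceEdges ν b w i j = 0 := by
  rw [forceEdges_apply]
  split_ifs <;> simp [h]

theorem forceEdges_map {S : Type*} [Zero S] (f : m → m → R → S) (hf : ∀ i j, f i j 0 = 0) :
    forceEdges (of fun i j => f i j (ν i j)) b w = of fun i j => f i j (forceEdges ν b w i j) := by
  ext i j
  simp only [forceEdges_apply, of_apply]
  split_ifs <;> simp [hf]

end Zero

theorem prod_forceEdges {S : Type*} [Zero R] [CommMonoidWithZero S] [Fintype m]
    (f : R → S) (hf : f 0 = 0) (ν : Matrix m m R) (b w : ι → m) (σ : m → m)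
    [Decidable (∀ t, σ (b t) = w t)] :
    ∏ i, f (forceEdges ν b w i (σ i)) = if ∀ t, σ (b t) = w t then ∏ i, f (ν i (σ i)) else 0 := by
  split_ifs with hσ
  · refine prod_congr rfl fun i _ => ?_
    rw [forceEdges_apply, if_neg]
    rintro ⟨t, rfl, hne⟩
    exact hne (hσ t).symm
  · push Not at hσ
    obtain ⟨t, ht⟩ := hσ
    refine prod_eq_zero (mem_univ (b t)) ?_
    rw [forceEdges_apply, if_pos ⟨t, rfl, Ne.symm ht⟩, hf]

theorem sum_prod_forceEdges {S : Type*} [Zero R] [CommSemiring S] [Fintype m]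
    (f : R → S) (hf : f 0 = 0) (ν : Matrix m m R) (b w : ι → m) (P : Finset (Equiv.Perm m))
    [DecidablePred fun σ : Equiv.Perm m => ∀ t, σ (b t) = w t] :
    ∑ σ ∈ P, ∏ i, f (forceEdges ν b w i (σ i)) =
      ∑ σ ∈ P with ∀ t, σ (b t) = w t, ∏ i, f (ν i (σ i)) := by
  simp only [prod_forceEdges f hf, sum_filter]

theorem det_forceEdges [CommRing R] [Fintype m] [DecidableEq m] [Fintype ι] [DecidableEq ι]
    (A : Matrix m m R) (hA : IsUnit A.det) {b : ι → m} (hb : Injective b) (w : ι → m) :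
    (forceEdges A b w).det =
      (∏ t, A (b t) (w t)) * (of fun t u => A⁻¹ (w t) (b u)).det * A.det := by
  set A' := forceEdges A b w
  have hoff : ∀ i ∉ Set.range b, (A' * A⁻¹) i = (1 : Matrix m m R) i := by
    intro i hi
    rw [← mul_nonsing_inv A hA]
    ext j
    simp only [mul_apply, A']
    rw [forceEdges_of_notMem_range hi]
  have hon : (A' * A⁻¹).submatrix b b = of fun t u => A (b t) (w t) * A⁻¹ (w t) (b u) := by
    ext t u
    simp only [submatrix_apply, mul_apply, A']
    rw [forceEdges_apply_self hb]
    simp [Pi.single_apply]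
  calc A'.det = (A' * A⁻¹).det * A.det := by rw [← det_mul, nonsing_inv_mul_cancel_right _ _ hA]
    _ = _ := by
      rw [det_eq_det_submatrix_of_row_eq_one _ hb hoff, hon]
      exact congrArg (· * A.det) (det_mul_column _ (of fun t u => A⁻¹ (w t) (b u)))

end Dimer

open Dimer

theorem dimer_correlation_formula_general (n r : ℕ)
    (Adj : Fin n → Fin n → Prop) [DecidableRel Adj] (s : Fin n → Fin n → ℂ)
    (S : ℂ) (hS : ‖S‖ = 1)
    (hdet : ∀ ν' : Fin n → Fin n → ℝ, (∀ i j, ¬Adj i j → ν' i j = 0) →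
      Matrix.det (Matrix.of fun i j : Fin n => s i j * (ν' i j : ℂ))
        = S * ∑ σ ∈ Finset.univ.filter (fun σ : Equiv.Perm (Fin n) => ∀ i, Adj i (σ i)),
            ∏ i, (ν' i (σ i) : ℂ))
    (ν : Fin n → Fin n → ℝ)
    (hν0 : ∀ i j, ¬Adj i j → ν i j = 0)
    (hZ : (∑ σ ∈ Finset.univ.filter (fun σ : Equiv.Perm (Fin n) => ∀ i, Adj i (σ i)),
        ∏ i, (ν i (σ i) : ℂ)) ≠ 0)
    (b w : Fin r → Fin n)
    (hdist : Function.Injective fun t => (b t, w t)) :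
    (∑ σ ∈ Finset.univ.filter (fun σ : Equiv.Perm (Fin n) =>
          (∀ i, Adj i (σ i)) ∧ ∀ t, σ (b t) = w t),
        ∏ i, (ν i (σ i) : ℂ)) /
        (∑ σ ∈ Finset.univ.filter (fun σ : Equiv.Perm (Fin n) => ∀ i, Adj i (σ i)),
          ∏ i, (ν i (σ i) : ℂ))
      = (∏ t, s (b t) (w t) * (ν (b t) (w t) : ℂ)) *
          Matrix.det (Matrix.of fun t u : Fin r =>
            (Matrix.of fun i j : Fin n => s i j * (ν i j : ℂ))⁻¹ (w t) (b u)) := by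
  set K : Matrix (Fin n) (Fin n) ℂ := of fun i j => s i j * (ν i j : ℂ)
  by_cases hb : Injective b
  · have hS0 : S ≠ 0 := norm_ne_zero_iff.mp (hS ▸ one_ne_zero)
    have hKdet : K.det = S * _ := hdet ν hν0
    have hK : IsUnit K.det := isUnit_iff_ne_zero.mpr (hKdet ▸ mul_ne_zero hS0 hZ)
    have hforceK : forceEdges K b w =
        of fun i j => s i j * ((forceEdges ν b w i j : ℝ) : ℂ) :=
      forceEdges_map (ν := ν) (fun i j (x : ℝ) => s i j * (x : ℂ)) fun i j => by simp
    have hdetForced := hdet (forceEdges ν b w) fun i j h =>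
      forceEdges_eq_zero (hν0 i j h)
    rw [← hforceK, det_forceEdges K hK hb w, hKdet] at hdetForced
    have hN := sum_prod_forceEdges _ Complex.ofReal_zero ν b w
      (univ.filter fun σ : Equiv.Perm (Fin n) => ∀ i, Adj i (σ i))
    rw [filter_filter] at hN
    have hKdiag : ∏ t, K (b t) (w t) = ∏ t, s (b t) (w t) * (ν (b t) (w t) : ℂ) := rfl
    simp only [hKdiag] at hdetForced
    rw [div_eq_iff hZ]
    apply mul_left_cancel₀ hS0
    linear_combination -hdetForced - S * hN
  · obtain ⟨t, u, hbtu, htu⟩ := not_injective_iff.mp hb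
    have hwtu : w t ≠ w u := fun h => htu (hdist (Prod.ext hbtu h))
    rw [filter_false_of_mem fun σ _ (hσ : _ ∧ ∀ t, σ (b t) = w t) =>
        hwtu (by rw [← hσ.2 t, ← hσ.2 u, hbtu]),
      sum_empty, zero_div, det_zero_of_column_eq htu fun k => by simp [hbtu], mul_zero]

/-- The Kenyon/Montroll–Potts–Ward formula for dimer correlations: with a Kasteleyn
matrix `K(i,j) = s(i,j)ν(i,j)` satisfying `det K = S·Z` with `|S| = 1` independent of
the weights, the probability that the distinct edges `e_t = b_t w_t`, `1 ≤ t ≤ r`, all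
belong to a random perfect matching (chosen with probability `ν(C)/Z`) equals
`∏_t K(b_t, w_t) · det(K⁻¹(w_t, b_u))_{1≤t,u≤r}`. -/
theorem dimer_correlation_formula (n r : ℕ)
    (Adj : Fin n → Fin n → Prop) [DecidableRel Adj] (s : Fin n → Fin n → ℂ)
    (hs : ∀ i j, Adj i j → ‖s i j‖ = 1)
    (S : ℂ) (hS : ‖S‖ = 1)
    (hdet : ∀ ν' : Fin n → Fin n → ℝ, (∀ i j, ¬Adj i j → ν' i j = 0) →
      Matrix.det (Matrix.of fun i j : Fin n => s i j * (ν' i j : ℂ))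
        = S * ∑ σ ∈ Finset.univ.filter (fun σ : Equiv.Perm (Fin n) => ∀ i, Adj i (σ i)),
            ∏ i, (ν' i (σ i) : ℂ))
    (ν : Fin n → Fin n → ℝ)
    (hν : ∀ i j, Adj i j → 0 < ν i j) (hν0 : ∀ i j, ¬Adj i j → ν i j = 0)
    (hZ : (∑ σ ∈ Finset.univ.filter (fun σ : Equiv.Perm (Fin n) => ∀ i, Adj i (σ i)),
        ∏ i, (ν i (σ i) : ℂ)) ≠ 0)
    (b w : Fin r → Fin n) (hbw : ∀ t, Adj (b t) (w t))
    (hdist : Function.Injective fun t => (b t, w t)) :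
    (∑ σ ∈ Finset.univ.filter (fun σ : Equiv.Perm (Fin n) =>
          (∀ i, Adj i (σ i)) ∧ ∀ t, σ (b t) = w t),
        ∏ i, (ν i (σ i) : ℂ)) /
        (∑ σ ∈ Finset.univ.filter (fun σ : Equiv.Perm (Fin n) => ∀ i, Adj i (σ i)),
          ∏ i, (ν i (σ i) : ℂ))
      = (∏ t, s (b t) (w t) * (ν (b t) (w t) : ℂ)) *
          Matrix.det (Matrix.of fun t u : Fin r =>
            (Matrix.of fun i j : Fin n => s i j * (ν i j : ℂ))⁻¹ (w t) (b u)) :=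
  dimer_correlation_formula_general n r Adj s S hS hdet ν hν0 hZ b w hdist
end

section
/- Let X be a finite set and ξ a determinantal point process on X with correlation kernel K, meaning that for all distinct points x_1,…,x_n ∈ X, P[ξ has particles at x_1,…,x_n] = det(K(x_i,x_j))_{1≤i,j≤n}. Then the dual (complementary) process ξ*, whose particle set is the complement in X of the particle set of ξ, is also determinantal with correlation kernel I − K: for all distinct y_1,…,y_n ∈ X, P[ξ* has particles at y_1,…,y_n] = det(δ_{ij} − K(y_i,y_j))_{1≤i,j≤n}. -/
/-!
Inclusion–exclusion writes the probability that none of `y₁,…,yₙ` is a particle as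
`∑ₛ (-1)^|s| P[all yᵢ, i ∈ s, are particles]`, which by the determinantal property is
`∑ₛ (-1)^|s| det K_s`; expanding `det (1 - K)` multilinearly in its rows gives the same sum of
signed principal minors.
-/

open Finset Matrix

namespace Matrix

variable {n R : Type*} [Fintype n] [DecidableEq n] [CommRing R]

theorem det_one_add_eq_sum_det_submatrix (M : Matrix n n R) :
    det (1 + M) = ∑ s : Finset n, (M.submatrix (↑) (↑) : Matrix s s R).det := by
  rw [add_comm]
  change detRowAlternating (M.row + (1 : Matrix n n R).row) = _
  rw [AlternatingMap.map_add_univ]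
  exact sum_congr rfl fun s _ => det_piecewise_one_eq_submatrix_det M s

theorem det_one_sub_eq_sum_det_submatrix (M : Matrix n n R) :
    det (1 - M) = ∑ s : Finset n, (-1) ^ #s * (M.submatrix (↑) (↑) : Matrix s s R).det := by
  rw [sub_eq_add_neg, det_one_add_eq_sum_det_submatrix]
  simp only [submatrix_neg, Pi.neg_apply, det_neg, Fintype.card_coe]

end Matrix

theorem Finset.inclusion_exclusion_sum_filter_forall_not {α ι G : Type*} [Fintype α] [Fintype ι]
    [DecidableEq α] [AddCommGroup G] (P : ι → α → Prop) [∀ i, DecidablePred (P i)]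
    (f : α → G) :
    ∑ a ∈ univ.filter (fun a => ∀ i, ¬ P i a), f a
      = ∑ t : Finset ι, (-1) ^ #t • ∑ a ∈ univ.filter (fun a => ∀ i ∈ t, P i a), f a := by
  have h := inclusion_exclusion_sum_inf_compl univ (fun i => univ.filter (P i)) f
  simp only [powerset_univ] at h
  convert h using 4 with t
  all_goals ext a; simp [mem_inf]

section Determinantal

variable {X R : Type*} [Fintype X] [DecidableEq X] [CommRing R]

def IsDeterminantal (μ : Finset X → R) (K : X → X → R) : Prop :=
  ∀ (n : ℕ) (x : Fin n → X), Function.Injective x →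
    ∑ A ∈ univ.filter (fun A : Finset X => ∀ i, x i ∈ A), μ A = (of fun i j => K (x i) (x j)).det

namespace IsDeterminantal

variable {μ : Finset X → R} {K : X → X → R} {ι : Type*} [Fintype ι] [DecidableEq ι]

theorem sum_filter_forall_mem_eq_det_submatrix (h : IsDeterminantal μ K) {y : ι → X}
    (hy : Function.Injective y) (s : Finset ι) :
    ∑ A ∈ univ.filter (fun A : Finset X => ∀ i ∈ s, y i ∈ A), μ A
      = ((of fun i j => K (y i) (y j)).submatrix (↑) (↑) : Matrix s s R).det := by
  set e := s.equivFin
  have hfilter : ∀ A : Finset X, (∀ k, y (e.symm k) ∈ A) ↔ ∀ i ∈ s, y i ∈ A := fun A =>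
    ⟨fun hA i hi => by simpa using hA (e ⟨i, hi⟩), fun hA k => hA _ (e.symm k).2⟩
  rw [← det_submatrix_equiv_self e.symm, ← filter_congr fun A _ => hfilter A]
  exact h #s _ (hy.comp (Subtype.val_injective.comp e.symm.injective))

theorem sum_filter_forall_notMem_eq_det_one_sub (h : IsDeterminantal μ K) {y : ι → X}
    (hy : Function.Injective y) :
    ∑ A ∈ univ.filter (fun A : Finset X => ∀ i, y i ∉ A), μ A
      = (1 - of fun i j => K (y i) (y j)).det := by
  rw [det_one_sub_eq_sum_det_submatrix,
    inclusion_exclusion_sum_filter_forall_not (fun i (A : Finset X) => y i ∈ A)]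
  refine sum_congr rfl fun s _ => ?_
  rw [zsmul_eq_mul, Int.cast_pow, Int.cast_neg, Int.cast_one]
  congr 1
  -- the two sides decide `∀ i ∈ s, y i ∈ A` by different instances
  convert h.sum_filter_forall_mem_eq_det_submatrix hy s using 3

end IsDeterminantal

end Determinantal

theorem dual_determinantal_process_general {X : Type*} [Fintype X] [DecidableEq X]
    (μ : Finset X → ℝ) (K : X → X → ℂ)
    (hK : ∀ (n : ℕ) (x : Fin n → X), Function.Injective x →
      ((∑ A ∈ Finset.univ.filter (fun A : Finset X => ∀ i, x i ∈ A), μ A : ℝ) : ℂ)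
        = Matrix.det (Matrix.of fun i j : Fin n => K (x i) (x j)))
    (n : ℕ) (y : Fin n → X) (hy : Function.Injective y) :
    ((∑ A ∈ Finset.univ.filter (fun A : Finset X => ∀ i, y i ∉ A), μ A : ℝ) : ℂ)
      = Matrix.det (Matrix.of fun i j : Fin n =>
          (if i = j then (1 : ℂ) else 0) - K (y i) (y j)) := by
  have hdet : IsDeterminantal (fun A => (μ A : ℂ)) K := fun m x hx => by
    simpa only [Complex.ofReal_sum] using hK m x hx
  have hI : (of fun i j : Fin n => (if i = j then (1 : ℂ) else 0) - K (y i) (y j))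
      = 1 - of fun i j => K (y i) (y j) := by
    ext i j
    simp [one_apply]
  rw [Complex.ofReal_sum, hI]
  -- `convert` reconciles `Nat.decidableForallFin` with `Fintype.decidableForallFintype`.
  convert hdet.sum_filter_forall_notMem_eq_det_one_sub hy using 3

/-- Duality for determinantal point processes on a finite set `X`: if a random subset
of `X` (given by a probability distribution `μ` on `Finset X`) is determinantal with
kernel `K`, i.e. for all distinct `x₁,…,xₙ` the probability of containing all of them
is `det(K(xᵢ,xⱼ))`, then the complementary process is determinantal with kernel `I - K`:
for all distinct `y₁,…,yₙ`, the probability that none of the `yᵢ` is a particle equals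
`det(δ_{ij} - K(yᵢ,yⱼ))`. -/
theorem dual_determinantal_process {X : Type*} [Fintype X] [DecidableEq X]
    (μ : Finset X → ℝ) (K : X → X → ℂ)
    (hμ0 : ∀ A, 0 ≤ μ A) (hμ1 : ∑ A : Finset X, μ A = 1)
    (hK : ∀ (n : ℕ) (x : Fin n → X), Function.Injective x →
      ((∑ A ∈ Finset.univ.filter (fun A : Finset X => ∀ i, x i ∈ A), μ A : ℝ) : ℂ)
        = Matrix.det (Matrix.of fun i j : Fin n => K (x i) (x j)))
    (n : ℕ) (y : Fin n → X) (hy : Function.Injective y) :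
    ((∑ A ∈ Finset.univ.filter (fun A : Finset X => ∀ i, y i ∉ A), μ A : ℝ) : ℂ)
      = Matrix.det (Matrix.of fun i j : Fin n =>
          (if i = j then (1 : ℂ) else 0) - K (y i) (y j)) :=
  dual_determinantal_process_general μ K hK n y hy
end

section
/- Let G be a finite directed acyclic graph with a weight function w : E → ℂ, extended multiplicatively to paths, and define the transition weight p(u,v) = ∑_{π ∈ Π(u,v)} w(π) over all directed paths from u to v. Let u_1,…,u_n and v_1,…,v_n be vertices that are G-compatible: whenever α < α' and β > β', every path from u_α to v_β intersects (shares a vertex with) every path from u_{α'} to v_{β'}. Then the total weight of all families (π_1,…,π_n) of pairwise vertex-disjoint paths with π_i from u_i to v_i equals det(p(u_i, v_j))_{1≤i,j≤n}. -/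
/-!
Expanding the determinant writes `det (p(uᵢ, vⱼ))` as a signed sum over pairs `(σ, π)` where `π`
is a family of paths `πₖ : uₖ → v_{σ k}`. On the intersecting families there is a
sign-reversing, weight-preserving involution: pick a vertex `x` lying on two of the paths and
exchange the tails after `x` of the first and the last path through `x`; this transposes two
values of `σ`. Choosing `x` as a function of the multiset of visited vertices, which the
exchange preserves, makes it an involution. The surviving families are vertex-disjoint, and by
compatibility their permutation has no inversion, so it is the identity.
-/

/-- A directed path from `u` to `v` in the graph with adjacency `Adj`, recorded as the
list of its vertices. -/
def IsDirPath {V : Type*} (Adj : V → V → Prop) (u v : V) (l : List V) : Prop :=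
  l ≠ [] ∧ l.head? = some u ∧ l.getLast? = some v ∧ l.Chain' Adj

/-- The weight of a path: the product of the weights of its edges. -/
noncomputable def dirPathWeight {V : Type*} (w : V → V → ℂ) (l : List V) : ℂ :=
  ((l.zip l.tail).map fun p => w p.1 p.2).prod

open Finset Function

theorem List.takeWhile_dropWhile {α : Type*} (p : α → Bool) (l : List α) :
    (l.dropWhile p).takeWhile p = [] := by
  induction l with
  | nil => rfl
  | cons a t ih => cases h : p a <;> simp_all

section SpliceAt

variable {V : Type*} [DecidableEq V]

def spliceAt (x : V) (l l' : List V) : List V :=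
  l.takeWhile (· != x) ++ l'.dropWhile (· != x)

theorem spliceAt_self (x : V) (l : List V) : spliceAt x l l = l :=
  List.takeWhile_append_dropWhile

theorem spliceAt_spliceAt (x : V) (l l' : List V) :
    spliceAt x (spliceAt x l l') (spliceAt x l' l) = l := by
  have hpre : ∀ l : List V, ∀ a ∈ l.takeWhile (· != x), (a != x) = true :=
    fun _ _ => List.mem_takeWhile_imp
  simp only [spliceAt, List.takeWhile_append_of_pos (hpre l), List.takeWhile_dropWhile,
    List.append_nil, List.dropWhile_append_of_pos (hpre l'), List.dropWhile_idempotent,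
    List.takeWhile_append_dropWhile]

theorem dropWhile_bne_eq_cons {x : V} {l : List V} (hx : x ∈ l) :
    l.dropWhile (· != x) = x :: (l.dropWhile (· != x)).tail := by
  induction l with
  | nil => cases hx
  | cons a t ih =>
    by_cases ha : a = x
    · simp [ha]
    · simp only [List.dropWhile_cons, bne_iff_ne, ne_eq, ha, not_false_eq_true,
        if_true]
      exact ih (by simpa [Ne.symm ha] using hx)

theorem take_one_dropWhile_bne (x : V) (l : List V) :
    (l.dropWhile (· != x)).take 1 = if x ∈ l then [x] else [] := by
  split_ifs with hx
  · rw [dropWhile_bne_eq_cons hx]; rfl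
  · rw [List.dropWhile_eq_nil_iff.2 fun a ha => by simpa using ne_of_mem_of_not_mem ha hx]
    rfl

theorem mem_spliceAt_self {x : V} {l l' : List V} : x ∈ spliceAt x l l' ↔ x ∈ l' := by
  constructor
  · intro h
    rcases List.mem_append.1 h with h | h
    · simpa using List.mem_takeWhile_imp h
    · exact (List.dropWhile_sublist _).subset h
  · intro h
    rw [spliceAt, dropWhile_bne_eq_cons h]
    simp

end SpliceAt

section Paths

variable {V : Type*} {Adj : V → V → Prop}

theorem List.IsChain.nodup (hacyclic : ∀ x, ¬Relation.TransGen Adj x x) {l : List V}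
    (h : l.IsChain Adj) : l.Nodup := by
  refine (List.isChain_iff_pairwise.1 (h.imp fun _ _ => Relation.TransGen.single)).imp ?_
  rintro a _ hab rfl
  exact hacyclic a hab

theorem IsDirPath.nodup (hacyclic : ∀ x, ¬Relation.TransGen Adj x x) {a b : V} {l : List V}
    (h : IsDirPath Adj a b l) : l.Nodup :=
  List.IsChain.nodup hacyclic h.2.2.2

theorem finite_setOf_isDirPath [Fintype V] (hacyclic : ∀ x, ¬Relation.TransGen Adj x x)
    (a b : V) : {l | IsDirPath Adj a b l}.Finite :=
  (List.finite_length_le V (Fintype.card V)).subset fun _ hl => (hl.nodup hacyclic).length_le_card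

theorem IsDirPath.append_cons {a b a' b' x : V} {s t s' t' : List V}
    (h : IsDirPath Adj a b (s ++ x :: t)) (h' : IsDirPath Adj a' b' (s' ++ x :: t')) :
    IsDirPath Adj a b' (s ++ x :: t') := by
  obtain ⟨-, hhead, -, hchain⟩ := h
  obtain ⟨-, -, hlast, hchain'⟩ := h'
  refine ⟨by simp, ?_, ?_, List.isChain_split.2 ⟨(List.isChain_split.1 hchain).1,
    (List.isChain_split.1 hchain').2⟩⟩
  · cases s <;> simpa using hhead
  · simpa [List.getLast?_append] using hlast

theorem IsDirPath.spliceAt [DecidableEq V] {a b a' b' x : V} {l l' : List V}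
    (h : IsDirPath Adj a b l) (h' : IsDirPath Adj a' b' l') (hx : x ∈ l) (hx' : x ∈ l') :
    IsDirPath Adj a b' (spliceAt x l l') := by
  rw [← List.takeWhile_append_dropWhile (p := (· != x)) (l := l), dropWhile_bne_eq_cons hx] at h
  rw [← List.takeWhile_append_dropWhile (p := (· != x)) (l := l'), dropWhile_bne_eq_cons hx'] at h'
  rw [_root_.spliceAt, dropWhile_bne_eq_cons hx']
  exact h.append_cons h'

end Paths

section Weights

variable {V : Type*} (w : V → V → ℂ)

@[simp]
theorem dirPathWeight_nil : dirPathWeight w [] = 1 := rfl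

@[simp]
theorem dirPathWeight_singleton (a : V) : dirPathWeight w [a] = 1 := rfl

@[simp]
theorem dirPathWeight_cons_cons (a b : V) (l : List V) :
    dirPathWeight w (a :: b :: l) = w a b * dirPathWeight w (b :: l) := by
  simp [dirPathWeight]

theorem dirPathWeight_append (s t : List V) :
    dirPathWeight w (s ++ t) = dirPathWeight w (s ++ t.take 1) * dirPathWeight w t := by
  induction s with
  | nil => cases t <;> simp
  | cons a s ih =>
    rcases s with _ | ⟨b, s⟩
    · cases t <;> simp
    · simp only [List.cons_append, dirPathWeight_cons_cons] at ih ⊢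
      rw [ih, mul_assoc]

theorem dirPathWeight_spliceAt [DecidableEq V] {x : V} {l l' : List V} (h : x ∈ l ↔ x ∈ l') :
    dirPathWeight w (spliceAt x l l') = dirPathWeight w (l.takeWhile (· != x) ++
      (l.dropWhile (· != x)).take 1) * dirPathWeight w (l'.dropWhile (· != x)) := by
  rw [spliceAt, dirPathWeight_append, take_one_dropWhile_bne, take_one_dropWhile_bne]
  simp only [h]

end Weights

section SpliceFamily

variable {ι V : Type*} [DecidableEq V]

def spliceFamily (x : V) (τ : Equiv.Perm ι) (π : ι → List V) (k : ι) : List V :=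
  spliceAt x (π k) (π (τ k))

variable {x : V} {τ : Equiv.Perm ι} {π : ι → List V}

theorem spliceFamily_spliceFamily (hτ : Involutive τ) :
    spliceFamily x τ (spliceFamily x τ π) = π :=
  funext fun k => by simp only [spliceFamily, hτ k, spliceAt_spliceAt]

theorem mem_spliceFamily_self {k : ι} : x ∈ spliceFamily x τ π k ↔ x ∈ π (τ k) :=
  mem_spliceAt_self

theorem isDirPath_spliceFamily {Adj : V → V → Prop} {a b : ι → V}
    (hπ : ∀ k, IsDirPath Adj (a k) (b k) (π k)) (hτ : ∀ k, τ k ≠ k → x ∈ π k) (k : ι) :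
    IsDirPath Adj (a k) (b (τ k)) (spliceFamily x τ π k) := by
  by_cases hk : τ k = k
  · rw [spliceFamily, hk, spliceAt_self]
    exact hπ k
  · exact (hπ k).spliceAt (hπ (τ k)) (hτ k hk) (hτ (τ k) fun h => hk (τ.injective h))

variable [Fintype ι]

theorem prod_dirPathWeight_spliceFamily (w : V → V → ℂ) (hτ : ∀ k, x ∈ π (τ k) ↔ x ∈ π k) :
    ∏ k, dirPathWeight w (spliceFamily x τ π k) = ∏ k, dirPathWeight w (π k) := by
  simp only [spliceFamily, dirPathWeight_spliceAt w (hτ _).symm, prod_mul_distrib,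
    Equiv.prod_comp τ fun k => dirPathWeight w ((π k).dropWhile (· != x))]
  rw [← prod_mul_distrib]
  simp only [← dirPathWeight_append, List.takeWhile_append_dropWhile]

end SpliceFamily

section VertexMultiset

variable {ι V : Type*} [Fintype ι]

def vertexMultiset (π : ι → List V) : Multiset V :=
  ∑ k, (π k : Multiset V)

theorem pairwise_disjoint_of_nodup_vertexMultiset [DecidableEq ι] {π : ι → List V}
    (h : (vertexMultiset π).Nodup) : Pairwise (List.Disjoint on π) := by
  intro i j hij y hyi hyj
  have hle : (π i : Multiset V) + π j ≤ vertexMultiset π := by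
    rw [← sum_pair hij (f := fun k => (π k : Multiset V))]
    exact sum_le_sum_of_subset (subset_univ _)
  exact Multiset.disjoint_left.1 (Multiset.nodup_add.1 (Multiset.nodup_of_le hle h)).2.2
    (Multiset.mem_coe.2 hyi) (Multiset.mem_coe.2 hyj)

variable [DecidableEq V]

def pathsThrough (x : V) (π : ι → List V) : Finset ι :=
  {k | x ∈ π k}

@[simp]
theorem mem_pathsThrough {x : V} {π : ι → List V} {k : ι} : k ∈ pathsThrough x π ↔ x ∈ π k := by
  simp [pathsThrough]

theorem count_vertexMultiset {π : ι → List V} (hπ : ∀ k, (π k).Nodup) (x : V) :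
    (vertexMultiset π).count x = #(pathsThrough x π) := by
  simp [vertexMultiset, pathsThrough, Multiset.count_sum', (hπ _).count, sum_boole]

theorem nodup_vertexMultiset_iff [DecidableEq ι] {π : ι → List V} (hπ : ∀ k, (π k).Nodup) :
    (vertexMultiset π).Nodup ↔ Pairwise (List.Disjoint on π) := by
  refine ⟨pairwise_disjoint_of_nodup_vertexMultiset,
    fun h => Multiset.nodup_iff_count_le_one.2 fun x => ?_⟩
  rw [count_vertexMultiset hπ, card_le_one]
  intro i hi j hj
  by_contra hij
  exact h hij (mem_pathsThrough.1 hi) (mem_pathsThrough.1 hj)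

theorem vertexMultiset_spliceFamily (x : V) (τ : Equiv.Perm ι) (π : ι → List V) :
    vertexMultiset (spliceFamily x τ π) = vertexMultiset π := by
  simp only [vertexMultiset, spliceFamily, spliceAt, ← Multiset.coe_add, sum_add_distrib,
    Equiv.sum_comp τ fun k => ((π k).dropWhile (· != x) : Multiset V)]
  rw [← sum_add_distrib]
  simp only [Multiset.coe_add, List.takeWhile_append_dropWhile]

end VertexMultiset

namespace Finset

variable {ι : Type*} [LinearOrder ι] {K : Finset ι} {k : ι}

def swapMinMax (K : Finset ι) : Equiv.Perm ι :=
  if h : K.Nonempty then Equiv.swap (K.min' h) (K.max' h) else 1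

theorem swapMinMax_involutive (K : Finset ι) : Involutive K.swapMinMax := by
  unfold swapMinMax
  split_ifs
  · exact Equiv.swap_apply_self _ _
  · exact fun _ => rfl

theorem mem_of_swapMinMax_apply_ne (h : K.swapMinMax k ≠ k) : k ∈ K := by
  unfold swapMinMax at h
  split_ifs at h with hK
  · by_contra hk
    exact h (Equiv.swap_apply_of_ne_of_ne (fun e => hk (e ▸ K.min'_mem hK))
      (fun e => hk (e ▸ K.max'_mem hK)))
  · exact absurd rfl h

theorem swapMinMax_apply_mem_iff : K.swapMinMax k ∈ K ↔ k ∈ K := by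
  by_cases h : K.swapMinMax k = k
  · rw [h]
  · refine ⟨fun _ => mem_of_swapMinMax_apply_ne h, fun _ => mem_of_swapMinMax_apply_ne ?_⟩
    rw [K.swapMinMax_involutive k]
    exact Ne.symm h

theorem sign_swapMinMax [Fintype ι] (h : 1 < #K) : Equiv.Perm.sign K.swapMinMax = -1 := by
  rw [swapMinMax, dif_pos (card_pos.1 (zero_lt_one.trans h))]
  exact Equiv.Perm.sign_swap (K.min'_lt_max'_of_card h).ne

end Finset

/-- `⟨σ, π⟩` stands for a family of paths `π k` from `u k` to `v (σ k)`. -/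
abbrev PermFamily (ι V : Type*) := Σ _ : Equiv.Perm ι, ι → List V

section Flip

variable {ι V : Type*} [Fintype ι] [LinearOrder ι] [DecidableEq V]

def flipAt (x : V) (p : PermFamily ι V) : PermFamily ι V :=
  ⟨p.1 * (pathsThrough x p.2).swapMinMax, spliceFamily x (pathsThrough x p.2).swapMinMax p.2⟩

variable (x : V) (p : PermFamily ι V)

theorem pathsThrough_flipAt : pathsThrough x (flipAt x p).2 = pathsThrough x p.2 := by
  ext k
  rw [mem_pathsThrough, flipAt, mem_spliceFamily_self, ← mem_pathsThrough,
    swapMinMax_apply_mem_iff, mem_pathsThrough]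

theorem flipAt_flipAt : flipAt x (flipAt x p) = p := by
  have hτ := (pathsThrough x p.2).swapMinMax_involutive
  conv_lhs => rw [flipAt, pathsThrough_flipAt]
  refine Sigma.ext ?_ (heq_of_eq (spliceFamily_spliceFamily hτ))
  rw [flipAt, mul_assoc, show _ * _ = (1 : Equiv.Perm ι) from Equiv.ext hτ, mul_one]

theorem vertexMultiset_flipAt : vertexMultiset (flipAt x p).2 = vertexMultiset p.2 :=
  vertexMultiset_spliceFamily _ _ _

theorem sign_flipAt (h : 1 < #(pathsThrough x p.2)) :
    Equiv.Perm.sign (flipAt x p).1 = -Equiv.Perm.sign p.1 := by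
  rw [flipAt, Equiv.Perm.sign_mul, sign_swapMinMax h, mul_neg_one]

theorem prod_dirPathWeight_flipAt (w : V → V → ℂ) :
    ∏ k, dirPathWeight w ((flipAt x p).2 k) = ∏ k, dirPathWeight w (p.2 k) :=
  prod_dirPathWeight_spliceFamily w fun _ => by
    rw [← mem_pathsThrough, swapMinMax_apply_mem_iff, mem_pathsThrough]

theorem isDirPath_flipAt {Adj : V → V → Prop} {u v : ι → V}
    (hp : ∀ k, IsDirPath Adj (u k) (v (p.1 k)) (p.2 k)) (k : ι) :
    IsDirPath Adj (u k) (v ((flipAt x p).1 k)) ((flipAt x p).2 k) :=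
  isDirPath_spliceFamily (b := fun k => v (p.1 k)) hp
    (fun _ h => mem_pathsThrough.1 (mem_of_swapMinMax_apply_ne h)) k

end Flip

section Cancellation

variable {ι V : Type*} [Fintype ι] [LinearOrder ι] [DecidableEq V] {Adj : V → V → Prop}

theorem sum_sign_mul_prod_dirPathWeight_eq_zero (hacyclic : ∀ x, ¬Relation.TransGen Adj x x)
    (w : V → V → ℂ) (u v : ι → V) (S : Finset (PermFamily ι V))
    (hS : ∀ p, p ∈ S ↔ ∀ k, IsDirPath Adj (u k) (v (p.1 k)) (p.2 k)) :
    ∑ p ∈ S with ¬(vertexMultiset p.2).Nodup,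
      ((Equiv.Perm.sign p.1 : ℤ) : ℂ) * ∏ k, dirPathWeight w (p.2 k) = 0 := by
  have hrep (p : PermFamily ι V) (hp : ¬(vertexMultiset p.2).Nodup) :
      ∃ x, 1 < (vertexMultiset p.2).count x := by
    simpa [Multiset.nodup_iff_count_le_one] using hp
  have hcard (p : PermFamily ι V) (hpS : p ∈ S) (hp : ¬(vertexMultiset p.2).Nodup) :
      1 < #(pathsThrough (hrep p hp).choose p.2) := by
    rw [← count_vertexMultiset fun k => ((hS p).1 hpS k).nodup hacyclic]
    exact (hrep p hp).choose_spec
  refine sum_involution (fun p hp => flipAt (hrep p (mem_filter.1 hp).2).choose p)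
    (fun p hp => ?_) (fun p hp _ => ?_) (fun p hp => ?_) (fun p hp => ?_) <;>
    obtain ⟨hpS, hbad⟩ := mem_filter.1 hp
  · rw [prod_dirPathWeight_flipAt, sign_flipAt _ _ (hcard p hpS hbad)]
    push_cast
    ring
  · intro h
    have := congrArg (fun q : PermFamily ι V => Equiv.Perm.sign q.1) h
    simp only [sign_flipAt _ _ (hcard p hpS hbad)] at this
    exact neg_units_ne_self _ this
  · exact mem_filter.2 ⟨(hS _).2 (isDirPath_flipAt _ _ ((hS p).1 hpS)),
      by rwa [vertexMultiset_flipAt]⟩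
  · -- `flipAt` preserves `vertexMultiset`, so the second flip is at the same vertex.
    have hchoose : ∀ (M M' : Multiset V) (h : ∃ x, 1 < M.count x) (h' : ∃ x, 1 < M'.count x),
        M = M' → h.choose = h'.choose := by
      rintro _ _ _ _ rfl
      rfl
    rw [hchoose _ _ _ (hrep p hbad) (vertexMultiset_flipAt _ _), flipAt_flipAt]

end Cancellation

def IsCompatible {ι V : Type*} [LT ι] (Adj : V → V → Prop) (u v : ι → V) : Prop :=
  ∀ (α α' β β' : ι), α < α' → β' < β → ∀ lp lq : List V,
    IsDirPath Adj (u α) (v β) lp → IsDirPath Adj (u α') (v β') lq → ∃ x, x ∈ lp ∧ x ∈ lq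

theorem Equiv.Perm.exists_lt_and_apply_lt_of_ne_one {ι : Type*} [LinearOrder ι] [Finite ι]
    {σ : Equiv.Perm ι} (hσ : σ ≠ 1) : ∃ i j, i < j ∧ σ j < σ i := by
  by_contra! h
  have hmono : StrictMono σ := fun i j hij => (h i j hij).lt_of_ne (σ.injective.ne hij.ne)
  exact hσ (Equiv.ext (congrFun ((hmono.range_inj strictMono_id).1 (by simp))))

theorem eq_one_of_nodup_vertexMultiset {ι V : Type*} [Fintype ι] [LinearOrder ι]
    {Adj : V → V → Prop} {u v : ι → V}
    (hcompat : IsCompatible Adj u v)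
    {σ : Equiv.Perm ι} {π : ι → List V} (hπ : ∀ k, IsDirPath Adj (u k) (v (σ k)) (π k))
    (hnodup : (vertexMultiset π).Nodup) : σ = 1 := by
  by_contra hσ
  obtain ⟨i, j, hij, hσij⟩ := σ.exists_lt_and_apply_lt_of_ne_one hσ
  obtain ⟨x, hxi, hxj⟩ := hcompat i j (σ i) (σ j) hij hσij (π i) (π j) (hπ i) (hπ j)
  exact pairwise_disjoint_of_nodup_vertexMultiset hnodup hij.ne hxi hxj

theorem Matrix.det_of_sum_finset {ι α R : Type*} [Fintype ι] [DecidableEq ι] [CommRing R]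
    (s : ι → ι → Finset α) (f : α → R) :
    (Matrix.of fun i j => ∑ a ∈ s i j, f a).det =
      ∑ σ : Equiv.Perm ι, ∑ π ∈ Fintype.piFinset fun i => s i (σ i),
        ((Equiv.Perm.sign σ : ℤ) : R) * ∏ i, f (π i) := by
  rw [← det_transpose, det_apply']
  refine sum_congr rfl fun σ _ => ?_
  simp only [transpose_apply, of_apply, prod_univ_sum, mul_sum]

theorem tsum_subtype_eq_sum {α β : Type*} [AddCommMonoid β] [TopologicalSpace β] {p : α → Prop}
    {s : Finset α} (hs : ∀ a, a ∈ s ↔ p a) (f : α → β) :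
    ∑' a : {a // p a}, f a = ∑ a ∈ s, f a := by
  rw [← Finset.tsum_subtype s f]
  exact ((Equiv.subtypeEquivRight hs).tsum_eq fun a => f a.1).symm

theorem sum_sign_mul_prod_dirPathWeight_eq_sum_nodup {ι V : Type*} [Fintype ι] [LinearOrder ι]
    [DecidableEq V] {Adj : V → V → Prop} (hacyclic : ∀ x, ¬Relation.TransGen Adj x x)
    (w : V → V → ℂ) {u v : ι → V}
    (hcompat : IsCompatible Adj u v)
    (P : V → V → Finset (List V)) (hP : ∀ a b l, l ∈ P a b ↔ IsDirPath Adj a b l) :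
    ∑ σ : Equiv.Perm ι, ∑ π ∈ Fintype.piFinset (fun k => P (u k) (v (σ k))),
      ((Equiv.Perm.sign σ : ℤ) : ℂ) * ∏ k, dirPathWeight w (π k) =
      ∑ π ∈ Fintype.piFinset (fun k => P (u k) (v k)) with (vertexMultiset π).Nodup,
        ∏ k, dirPathWeight w (π k) := by
  have hfam (σ : Equiv.Perm ι) (π : ι → List V) :
      π ∈ Fintype.piFinset (fun k => P (u k) (v (σ k))) ↔
        ∀ k, IsDirPath Adj (u k) (v (σ k)) (π k) := by
    simp only [Fintype.mem_piFinset, hP]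
  have hcancel : ∑ σ : Equiv.Perm ι, ∑ π ∈ Fintype.piFinset (fun k => P (u k) (v (σ k))) with
      ¬(vertexMultiset π).Nodup, ((Equiv.Perm.sign σ : ℤ) : ℂ) * ∏ k, dirPathWeight w (π k) = 0 := by
    simpa only [sum_filter, sum_sigma] using sum_sign_mul_prod_dirPathWeight_eq_zero hacyclic w u v
      (univ.sigma fun σ => Fintype.piFinset fun k => P (u k) (v (σ k))) (by simp [hfam])
  rw [← sum_congr rfl fun σ _ => sum_filter_add_sum_filter_not _
      (fun π : ι → List V => (vertexMultiset π).Nodup) _, sum_add_distrib, hcancel, add_zero,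
    sum_eq_single 1 (fun σ _ hσ => sum_eq_zero fun π hπ => ?_) (by simp)]
  · simp
  · obtain ⟨hπ, hnodup⟩ := mem_filter.1 hπ
    exact absurd (eq_one_of_nodup_vertexMultiset hcompat ((hfam σ π).1 hπ) hnodup) hσ

/-- The Lindström–Gessel–Viennot lemma: in a finite directed acyclic graph with edge
weights `w`, if the starting points `u₁,…,uₙ` and endpoints `v₁,…,vₙ` are
`G`-compatible (whenever `α < α'` and `β' < β`, every path `u_α → v_β` shares a vertex
with every path `u_{α'} → v_{β'}`), then the total weight of all families of pairwise
vertex-disjoint paths `πᵢ : uᵢ → vᵢ` equals `det(p(uᵢ, vⱼ))`, where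
`p(u,v) = ∑_{π : u → v} w(π)`. -/
theorem lindstrom_gessel_viennot {V : Type*} [Fintype V] [DecidableEq V]
    (Adj : V → V → Prop) (hacyclic : ∀ x, ¬Relation.TransGen Adj x x)
    (w : V → V → ℂ) (n : ℕ) (u v : Fin n → V)
    (hcompat : ∀ (α α' β β' : Fin n), α < α' → β' < β → ∀ lp lq : List V,
      IsDirPath Adj (u α) (v β) lp → IsDirPath Adj (u α') (v β') lq →
      ∃ x, x ∈ lp ∧ x ∈ lq) :
    (∑' π : {π : Fin n → List V // (∀ i, IsDirPath Adj (u i) (v i) (π i)) ∧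
        ∀ i j, i ≠ j → ∀ x ∈ π i, x ∉ π j},
      ∏ i, dirPathWeight w (π.1 i))
      = Matrix.det (Matrix.of fun i j : Fin n =>
          ∑' l : {l : List V // IsDirPath Adj (u i) (v j) l}, dirPathWeight w l.1) := by
  set P : V → V → Finset (List V) := fun a b => (finite_setOf_isDirPath hacyclic a b).toFinset
  have hP (a b : V) (l : List V) : l ∈ P a b ↔ IsDirPath Adj a b l := Set.Finite.mem_toFinset _
  have hentries : (Matrix.of fun i j : Fin n =>
      ∑' l : {l : List V // IsDirPath Adj (u i) (v j) l}, dirPathWeight w l.1) =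
      Matrix.of fun i j => ∑ l ∈ P (u i) (v j), dirPathWeight w l := by
    ext i j
    exact tsum_subtype_eq_sum (hP _ _) _
  rw [hentries, Matrix.det_of_sum_finset, sum_sign_mul_prod_dirPathWeight_eq_sum_nodup hacyclic w
    hcompat P hP]
  refine tsum_subtype_eq_sum (fun π => ?_) fun π : Fin n → List V => ∏ k, dirPathWeight w (π k)
  rw [mem_filter, Fintype.mem_piFinset]
  simp only [hP]
  exact and_congr_right fun hπ => nodup_vertexMultiset_iff fun k => (hπ k).nodup hacyclic
end
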